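/- arXiv:2403.09729 — 10 statements merged into one kernel-verified Lean document; each statement's English description precedes it below -/
import Mathlib

section
/- For all complex numbers α, β, γ with (α+1)/2, (β+1)/2, γ+1 not non-positive integers, and for all non-negative integers n, the quantity z_n = ((α+1)/2)_n ((β+1)/2)_n / (γ+1)_n · (z_0 + (C/2) ∑_{k=0}^{n-1} (1/2)_k (γ+1)_k / (((α+1)/2)_{k+1} ((β+1)/2)_{k+1})) satisfies the recurrence (n+γ+1) z_{n+1} − (n+(α+1)/2)(n+(β+1)/2) z_n = (C/2)(1/2)_n, for any constants z_0, C ∈ ℂ. -/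
/-- Pochhammer symbol (rising factorial) `(a)_n = a(a+1)⋯(a+n-1)`. -/
noncomputable def poch (a : ℂ) (n : ℕ) : ℂ := (ascPochhammer ℂ n).eval a

/-!
Write `z n = P n * w n` with `P n = (a)_n (b)_n / (g)_n`, where `a = (α+1)/2`, `b = (β+1)/2`,
`g = γ+1`. Then `(n + g) P (n+1) = (n + a)(n + b) P n`, so `P` solves the homogeneous recurrence
and only the increment `w (n+1) - w n` survives on the left-hand side (variation of constants);
this increment is exactly the `n`-th summand, and `(n + g) P (n+1)` times it is `(C/2) (1/2)_n`.
-/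

open Finset

theorem recurrence_of_eq_mul_partial_sum {R : Type*} [CommRing R] (u v f P t z : ℕ → R) (c : R)
    (n : ℕ) (hP : u n * P (n + 1) = v n * P n) (ht : u n * P (n + 1) * t n = f n)
    (hz : ∀ m, z m = P m * (c + ∑ k ∈ range m, t k)) :
    u n * z (n + 1) - v n * z n = f n := by
  rw [hz, hz, sum_range_succ]
  linear_combination (c + ∑ k ∈ range n, t k) * hP + ht

lemma poch_succ (a : ℂ) (n : ℕ) : poch a (n + 1) = poch a n * (a + n) :=
  ascPochhammer_succ_eval n a

lemma poch_ne_zero {a : ℂ} (h : ∀ k : ℕ, a ≠ -(k : ℂ)) (n : ℕ) : poch a n ≠ 0 := by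
  rintro hzero
  obtain ⟨k, -, hk⟩ := (ascPochhammer_eval_eq_zero_iff n a).mp hzero
  exact h k (by rw [hk, neg_neg])

lemma add_natCast_ne_zero {a : ℂ} (h : ∀ k : ℕ, a ≠ -(k : ℂ)) (n : ℕ) : a + n ≠ 0 :=
  fun hzero => h n (eq_neg_of_add_eq_zero_left hzero)

lemma add_mul_poch_ratio_succ (a b g : ℂ) (hg : ∀ k : ℕ, g ≠ -(k : ℂ)) (n : ℕ) :
    (n + g) * (poch a (n + 1) * poch b (n + 1) / poch g (n + 1)) =
      (n + a) * (n + b) * (poch a n * poch b n / poch g n) := by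
  have hG := poch_ne_zero hg n
  have hgn := add_natCast_ne_zero hg n
  rw [poch_succ a, poch_succ b, poch_succ g]
  field_simp
  ring

theorem stmt4 (α β γ z0 C : ℂ)
    (hα : ∀ k : ℕ, (α + 1) / 2 ≠ -(k : ℂ))
    (hβ : ∀ k : ℕ, (β + 1) / 2 ≠ -(k : ℂ))
    (hγ : ∀ k : ℕ, γ + 1 ≠ -(k : ℂ))
    (z : ℕ → ℂ)
    (hz : ∀ n : ℕ, z n =
      poch ((α + 1) / 2) n * poch ((β + 1) / 2) n / poch (γ + 1) n *
        (z0 + C / 2 * ∑ k ∈ Finset.range n,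
          poch (1 / 2) k * poch (γ + 1) k /
            (poch ((α + 1) / 2) (k + 1) * poch ((β + 1) / 2) (k + 1)))) :
    ∀ n : ℕ, ((n : ℂ) + γ + 1) * z (n + 1) -
        ((n : ℂ) + (α + 1) / 2) * ((n : ℂ) + (β + 1) / 2) * z n =
      C / 2 * poch (1 / 2) n := by
  set a := (α + 1) / 2
  set b := (β + 1) / 2
  intro n
  refine recurrence_of_eq_mul_partial_sum (fun n => (n : ℂ) + γ + 1) (fun n => (n + a) * (n + b))
    (fun n => C / 2 * poch (1 / 2) n)
    (fun n => poch a n * poch b n / poch (γ + 1) n)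
    (fun k => C / 2 * (poch (1 / 2) k * poch (γ + 1) k / (poch a (k + 1) * poch b (k + 1))))
    z z0 n ?_ ?_ (fun m => by rw [hz, mul_sum])
  · simpa only [add_assoc] using add_mul_poch_ratio_succ a b (γ + 1) hγ n
  · have hA := poch_ne_zero hα (n + 1)
    have hB := poch_ne_zero hβ (n + 1)
    have hG := poch_ne_zero hγ n
    have hgn := add_natCast_ne_zero hγ n
    simp only [poch_succ (γ + 1) n]
    field_simp
    ring
end

section
/- The series ∑_{n=0}^∞ (n!)² / (2n)! · 4ⁿ / (2n+1)² equals 2G, where G is Catalan's constant. -/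
/-!
Since `(n!)² / (2n+1)! = ∫₀¹ (x(1-x))ⁿ dx` and `1/(2n+1) = ∫₀¹ y²ⁿ dy`, the left-hand side
is the double integral `∫₀¹ ∫₀¹ dx dy / (1 - 4x(1-x)y²)`. The inner integral is an arctangent,
and the substitution `y = 2u/(1+u²)` turns the outer one into `∫₀¹ 2 arctan u / u du`, which is
twice Catalan's constant by integrating the arctangent series term by term.
-/

open MeasureTheory Real Set
open scoped Nat

lemma centralBinom_mul_factorial_sq (n : ℕ) : n.centralBinom * n ! ^ 2 = (2 * n)! := by
  have h := Nat.choose_mul_factorial_mul_factorial (n := 2 * n) (k := n) (by omega)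
  rwa [show 2 * n - n = n by omega, mul_assoc, ← sq] at h

lemma four_pow_mul_factorial_sq_le (n : ℕ) : 4 ^ n * n ! ^ 2 ≤ (2 * n + 1)! := by
  rw [Nat.factorial_succ, ← centralBinom_mul_factorial_sq, ← mul_assoc]
  exact Nat.mul_le_mul_right _ (Nat.four_pow_le_two_mul_add_one_mul_central_binom n)

lemma four_pow_sq_le_mul_centralBinom_sq (n : ℕ) :
    (4 ^ n) ^ 2 ≤ (4 * n + 1) * n.centralBinom ^ 2 := by
  induction n with
  | zero => simp
  | succ n ih =>
    refine Nat.le_of_mul_le_mul_left ?_ (by positivity : 0 < (n + 1) ^ 2)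
    calc (n + 1) ^ 2 * (4 ^ (n + 1)) ^ 2 = 16 * (n + 1) ^ 2 * (4 ^ n) ^ 2 := by ring
      _ ≤ 16 * (n + 1) ^ 2 * ((4 * n + 1) * n.centralBinom ^ 2) := by gcongr
      _ = (16 * (n + 1) ^ 2 * (4 * n + 1)) * n.centralBinom ^ 2 := by ring
      _ ≤ (4 * (4 * n + 5) * (2 * n + 1) ^ 2) * n.centralBinom ^ 2 :=
        Nat.mul_le_mul_right _ (by ring_nf; omega)
      _ = (4 * n + 5) * (2 * (2 * n + 1) * n.centralBinom) ^ 2 := by ring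
      _ = (n + 1) ^ 2 * ((4 * (n + 1) + 1) * (n + 1).centralBinom ^ 2) := by
        rw [← Nat.succ_mul_centralBinom_succ]; ring

lemma summable_factorial_sq_div_factorial_mul_four_pow_div_sq :
    Summable fun n : ℕ => (n ! : ℝ) ^ 2 / (2 * n)! * 4 ^ n / (2 * n + 1) ^ 2 := by
  have hp : Summable fun n : ℕ => (((n + 1 : ℕ) : ℝ) ^ (3 / 2 : ℝ))⁻¹ :=
    (summable_nat_add_iff 1).2 (summable_nat_rpow_inv.2 (by norm_num))
  refine hp.of_nonneg_of_le (fun n => by positivity) fun n => ?_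
  have hterm : (n ! : ℝ) ^ 2 / (2 * n)! * 4 ^ n / (2 * n + 1) ^ 2 =
      4 ^ n / n.centralBinom / (2 * n + 1) ^ 2 := by
    rw [← centralBinom_mul_factorial_sq]; push_cast; field_simp
  have hrpow : ((((n + 1 : ℕ) : ℝ) ^ (3 / 2 : ℝ))⁻¹) ^ 2 = 1 / ((n : ℝ) + 1) ^ 3 := by
    rw [inv_pow, ← rpow_natCast, ← rpow_mul (by positivity), one_div]
    norm_num
  rw [hterm, ← pow_le_pow_iff_left₀ (by positivity) (by positivity) two_ne_zero, hrpow]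
  calc ((4:ℝ) ^ n / n.centralBinom / (2 * n + 1) ^ 2) ^ 2
      = ((4:ℝ) ^ n) ^ 2 / n.centralBinom ^ 2 / (2 * n + 1) ^ 4 := by
        rw [div_pow, div_pow, ← pow_mul (2 * (n : ℝ) + 1)]
    _ ≤ (4 * n + 1 : ℝ) / (2 * n + 1) ^ 4 := by
      gcongr
      rw [div_le_iff₀ (pow_pos (by exact_mod_cast n.centralBinom_pos) 2)]
      exact_mod_cast four_pow_sq_le_mul_centralBinom_sq n
    _ ≤ 1 / ((n : ℝ) + 1) ^ 3 := by
      rw [div_le_div_iff₀ (by positivity) (by positivity)]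
      nlinarith [sq_nonneg (n : ℝ), pow_nonneg (Nat.cast_nonneg (α := ℝ) n) 3,
        pow_nonneg (Nat.cast_nonneg (α := ℝ) n) 4]

lemma setIntegral_Ioo_zero_one_pow (k : ℕ) : ∫ x in Ioo (0:ℝ) 1, x ^ k = 1 / (k + 1) := by
  rw [← integral_Ioc_eq_integral_Ioo, ← intervalIntegral.integral_of_le zero_le_one,
    integral_pow]
  simp

lemma tsum_div_two_mul_add_one_eq_setIntegral_tsum {a : ℕ → ℝ}
    (ha : Summable fun n : ℕ => |a n| / (2 * n + 1)) :
    ∑' n : ℕ, a n / (2 * n + 1) = ∫ s in Ioo (0:ℝ) 1, ∑' n : ℕ, a n * s ^ (2 * n) := by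
  have hmonomial (c : ℝ) (n : ℕ) :
      ∫ s in Ioo (0:ℝ) 1, c * s ^ (2 * n) = c / (2 * n + 1) := by
    rw [integral_const_mul, setIntegral_Ioo_zero_one_pow]; push_cast; ring
  have hnorm (n : ℕ) :
      (fun s : ℝ => ‖a n * s ^ (2 * n)‖) = fun s => |a n| * s ^ (2 * n) := by
    ext s; rw [norm_mul, norm_pow, Real.norm_eq_abs, Real.norm_eq_abs, pow_mul, sq_abs, pow_mul]
  rw [← integral_tsum_of_summable_integral_norm]
  · simp_rw [hmonomial]
  · exact fun n => (by fun_prop : Continuous fun s : ℝ => a n * s ^ (2 * n)).integrableOn_Icc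
      |>.mono_set Ioo_subset_Icc_self
  · simpa only [hnorm, hmonomial] using ha

lemma tsum_neg_one_pow_div_sq_eq_setIntegral_arctan_div :
    ∑' n : ℕ, (-1 : ℝ) ^ n / (2 * n + 1) ^ 2 = ∫ s in Ioo (0:ℝ) 1, arctan s / s := by
  have hsummable : Summable fun n : ℕ => |(-1 : ℝ) ^ n / (2 * n + 1)| / (2 * n + 1) := by
    refine ((summable_nat_add_iff 1).2 (summable_one_div_nat_pow.2 one_lt_two)).of_nonneg_of_le
      (fun n => by positivity) fun n => ?_
    rw [abs_div, abs_pow, abs_neg, abs_one, one_pow, abs_of_pos (by positivity), div_div,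
      ← sq, Nat.cast_add_one]
    gcongr
    linarith [Nat.cast_nonneg (α := ℝ) n]
  calc ∑' n : ℕ, (-1 : ℝ) ^ n / (2 * n + 1) ^ 2
      = ∑' n : ℕ, (-1 : ℝ) ^ n / (2 * n + 1) / (2 * n + 1) := by simp_rw [div_div, ← sq]
    _ = ∫ s in Ioo (0:ℝ) 1, ∑' n : ℕ, (-1 : ℝ) ^ n / (2 * n + 1) * s ^ (2 * n) :=
      tsum_div_two_mul_add_one_eq_setIntegral_tsum hsummable
    _ = ∫ s in Ioo (0:ℝ) 1, arctan s / s := by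
      refine setIntegral_congr_fun measurableSet_Ioo fun s ⟨hs0, hs1⟩ => ?_
      refine (tsum_congr fun n => ?_).trans
        ((hasSum_arctan (x := s) (by rwa [norm_of_nonneg hs0.le])).div_const s).tsum_eq
      rw [pow_succ]
      push_cast
      field_simp

lemma integral_mul_one_sub_pow (n : ℕ) :
    ∫ x in (0:ℝ)..1, (x * (1 - x)) ^ n = (n ! : ℝ) ^ 2 / (2 * n + 1)! := by
  have hn : (0:ℝ) < ((n : ℂ) + 1).re := by
    simp only [Complex.add_re, Complex.natCast_re, Complex.one_re]; positivity
  have hΓ := Complex.Gamma_mul_Gamma_eq_betaIntegral hn hn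
  have h2n : ((n : ℂ) + 1) + ((n : ℂ) + 1) = ((2 * n + 1 : ℕ) : ℂ) + 1 := by push_cast; ring
  rw [h2n, Complex.Gamma_nat_eq_factorial, Complex.Gamma_nat_eq_factorial] at hΓ
  have hB : Complex.betaIntegral ((n : ℂ) + 1) ((n : ℂ) + 1) =
      ((∫ x in (0:ℝ)..1, (x * (1 - x)) ^ n : ℝ) : ℂ) := by
    rw [Complex.betaIntegral, ← intervalIntegral.integral_ofReal]
    refine intervalIntegral.integral_congr fun x _ => ?_
    simp only [add_sub_cancel_right, Complex.cpow_natCast]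
    push_cast
    rw [mul_pow]
  rw [hB] at hΓ
  rw [eq_div_iff (by exact_mod_cast (2 * n + 1).factorial_ne_zero), sq]
  exact_mod_cast (hΓ.trans (mul_comm _ _)).symm

lemma tsum_factorial_sq_div_mul_pow_eq_integral {r : ℝ} (hr : |r| < 4) :
    ∑' n : ℕ, (n ! : ℝ) ^ 2 / (2 * n + 1)! * r ^ n =
      ∫ x in (0:ℝ)..1, (1 - r * (x * (1 - x)))⁻¹ := by
  have hmoment (c : ℝ) (n : ℕ) :
      ∫ x in Ioc (0:ℝ) 1, (c * (x * (1 - x))) ^ n = (n ! : ℝ) ^ 2 / (2 * n + 1)! * c ^ n := by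
    simp only [mul_pow c]
    rw [integral_const_mul, ← intervalIntegral.integral_of_le zero_le_one,
      integral_mul_one_sub_pow, mul_comm]
  have hnonneg : ∀ x ∈ Ioc (0:ℝ) 1, 0 ≤ x * (1 - x) := fun x ⟨hx0, hx1⟩ =>
    mul_nonneg hx0.le (sub_nonneg.2 hx1)
  have hnorm (n : ℕ) : ∫ x in Ioc (0:ℝ) 1, ‖(r * (x * (1 - x))) ^ n‖ =
      (n ! : ℝ) ^ 2 / (2 * n + 1)! * |r| ^ n := by
    rw [← hmoment]
    refine setIntegral_congr_fun measurableSet_Ioc fun x hx => ?_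
    rw [norm_pow, norm_mul, Real.norm_eq_abs, Real.norm_of_nonneg (hnonneg x hx)]
  have hsummable : Summable fun n : ℕ => (n ! : ℝ) ^ 2 / (2 * n + 1)! * |r| ^ n := by
    refine (summable_geometric_of_lt_one (by positivity) (by linarith : |r| / 4 < 1))
      |>.of_nonneg_of_le (fun n => by positivity) fun n => ?_
    have h : (4 : ℝ) ^ n * n ! ^ 2 ≤ (2 * n + 1)! := by
      exact_mod_cast four_pow_mul_factorial_sq_le n
    rw [div_pow, ← mul_div_right_comm, div_le_div_iff₀ (by positivity) (by positivity)]
    linarith [mul_le_mul_of_nonneg_left h (pow_nonneg (abs_nonneg r) n)]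
  calc ∑' n : ℕ, (n ! : ℝ) ^ 2 / (2 * n + 1)! * r ^ n
      = ∑' n : ℕ, ∫ x in Ioc (0:ℝ) 1, (r * (x * (1 - x))) ^ n := by simp_rw [hmoment]
    _ = ∫ x in Ioc (0:ℝ) 1, ∑' n : ℕ, (r * (x * (1 - x))) ^ n := by
      refine integral_tsum_of_summable_integral_norm (fun n => ?_) (by simpa only [hnorm])
      exact (by fun_prop : Continuous fun x : ℝ => (r * (x * (1 - x))) ^ n).integrableOn_Icc
        |>.mono_set Ioc_subset_Icc_self
    _ = ∫ x in (0:ℝ)..1, (1 - r * (x * (1 - x)))⁻¹ := by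
      rw [intervalIntegral.integral_of_le zero_le_one]
      refine setIntegral_congr_fun measurableSet_Ioc fun x hx => tsum_geometric_of_norm_lt_one ?_
      have hquarter : x * (1 - x) ≤ 1 / 4 := by nlinarith [sq_nonneg (2 * x - 1)]
      rw [norm_mul, Real.norm_eq_abs, Real.norm_of_nonneg (hnonneg x hx)]
      nlinarith [abs_nonneg r, hnonneg x hx]

lemma tsum_factorial_sq_div_factorial_mul_four_pow_div_sq_eq_setIntegral :
    ∑' n : ℕ, (n ! : ℝ) ^ 2 / (2 * n)! * 4 ^ n / (2 * n + 1) ^ 2 =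
      ∫ y in Ioo (0:ℝ) 1, ∫ x in (0:ℝ)..1, (1 - 4 * y ^ 2 * (x * (1 - x)))⁻¹ := by
  have hterm (n : ℕ) : (n ! : ℝ) ^ 2 / (2 * n)! * 4 ^ n / (2 * n + 1) ^ 2 =
      (n ! : ℝ) ^ 2 / (2 * n + 1)! * 4 ^ n / (2 * n + 1) := by
    rw [Nat.factorial_succ]
    push_cast
    field_simp
  simp_rw [hterm]
  rw [tsum_div_two_mul_add_one_eq_setIntegral_tsum
    (summable_factorial_sq_div_factorial_mul_four_pow_div_sq.congr fun n => by
      rw [hterm, abs_of_nonneg (by positivity)])]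
  refine setIntegral_congr_fun measurableSet_Ioo fun y ⟨hy0, hy1⟩ => ?_
  rw [← tsum_factorial_sq_div_mul_pow_eq_integral]
  · simp_rw [mul_pow, pow_mul, mul_assoc]
  · rw [abs_of_nonneg (by positivity)]
    nlinarith

lemma integral_inv_sq_add_mul_sq {b c : ℝ} (hb : 0 < b) (hc : 0 < c) :
    ∫ t in (-1:ℝ)..1, (b ^ 2 + (c * t) ^ 2)⁻¹ = 2 * arctan (c / b) / (b * c) := by
  have h (t : ℝ) : (b ^ 2 + (c * t) ^ 2)⁻¹ = (b ^ 2)⁻¹ * (1 + (c / b * t) ^ 2)⁻¹ := by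
    field_simp
  simp_rw [h]
  rw [intervalIntegral.integral_const_mul,
    intervalIntegral.integral_comp_mul_left (fun s => (1 + s ^ 2)⁻¹) (by positivity),
    integral_inv_one_add_sq, mul_neg_one, mul_one, arctan_neg, smul_eq_mul]
  field_simp
  ring

lemma integral_inv_one_sub_mul_mul_one_sub_two_mul_div_one_add_sq {u : ℝ} (hu0 : 0 < u)
    (hu1 : u < 1) :
    ∫ x in (0:ℝ)..1, (1 - 4 * (2 * u / (1 + u ^ 2)) ^ 2 * (x * (1 - x)))⁻¹ =
      (1 + u ^ 2) ^ 2 * arctan u / (u * (1 - u ^ 2)) := by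
  have hu2 : 0 < 1 - u ^ 2 := by nlinarith
  have h (x : ℝ) : 1 - 4 * (2 * u / (1 + u ^ 2)) ^ 2 * (x * (1 - x)) =
      ((1 - u ^ 2) ^ 2 + (2 * u * (2 * x - 1)) ^ 2) / (1 + u ^ 2) ^ 2 := by
    field_simp
    ring
  simp_rw [h, inv_div, div_eq_mul_inv _ ((1 - u ^ 2) ^ 2 + _)]
  rw [intervalIntegral.integral_const_mul,
    intervalIntegral.integral_comp_mul_sub (fun t => ((1 - u ^ 2) ^ 2 + (2 * u * t) ^ 2)⁻¹)
      two_ne_zero, show (2:ℝ) * 0 - 1 = -1 by norm_num, show (2:ℝ) * 1 - 1 = 1 by norm_num,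
    smul_eq_mul]
  rw [integral_inv_sq_add_mul_sq hu2 (by positivity), ← two_mul_arctan (by linarith) hu1]
  field_simp

lemma hasDerivAt_two_mul_div_one_add_sq (u : ℝ) :
    HasDerivAt (fun u : ℝ => 2 * u / (1 + u ^ 2)) (2 * (1 - u ^ 2) / (1 + u ^ 2) ^ 2) u := by
  have h := ((hasDerivAt_id u).const_mul 2).div ((hasDerivAt_pow 2 u).const_add 1)
    (by positivity : 1 + u ^ 2 ≠ 0)
  exact h.congr_deriv (by
    simp only [mul_one, id_eq, Nat.cast_ofNat, Nat.add_one_sub_one, pow_one]; ring)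

lemma setIntegral_Ioo_zero_one_eq_comp_two_mul_div_one_add_sq {E : Type*} [NormedAddCommGroup E]
    [NormedSpace ℝ E] (g : ℝ → E) :
    ∫ y in Ioo (0:ℝ) 1, g y =
      ∫ u in Ioo (0:ℝ) 1, (2 * (1 - u ^ 2) / (1 + u ^ 2) ^ 2) • g (2 * u / (1 + u ^ 2)) := by
  set f : ℝ → ℝ := fun u => 2 * u / (1 + u ^ 2)
  have hcont : Continuous f := by fun_prop (disch := intro; positivity)
  have hmono : StrictMonoOn f (Icc 0 1) := by
    refine strictMonoOn_of_deriv_pos (convex_Icc 0 1) hcont.continuousOn fun u hu => ?_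
    rw [interior_Icc] at hu
    rw [(hasDerivAt_two_mul_div_one_add_sq u).deriv]
    have : 0 < 1 - u ^ 2 := by nlinarith [hu.1, hu.2]
    positivity
  have himage : f '' Ioo 0 1 = Ioo 0 1 := by
    rw [hcont.continuousOn.image_Ioo_of_strictMonoOn zero_le_one hmono]
    norm_num [f]
  conv_lhs => rw [← himage]
  rw [integral_image_eq_integral_abs_deriv_smul measurableSet_Ioo
    (fun u _ => (hasDerivAt_two_mul_div_one_add_sq u).hasDerivWithinAt)
    (hmono.injOn.mono Ioo_subset_Icc_self)]
  refine setIntegral_congr_fun measurableSet_Ioo fun u ⟨hu0, hu1⟩ => ?_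
  have : 0 < 1 - u ^ 2 := by nlinarith
  rw [abs_of_pos (by positivity)]

theorem stmt7 :
    ∑' n : ℕ, ((n.factorial : ℝ) ^ 2 / (2 * n).factorial * 4 ^ n / (2 * n + 1) ^ 2) =
      2 * ∑' n : ℕ, ((-1 : ℝ) ^ n / (2 * n + 1) ^ 2) := by
  rw [tsum_factorial_sq_div_factorial_mul_four_pow_div_sq_eq_setIntegral,
    setIntegral_Ioo_zero_one_eq_comp_two_mul_div_one_add_sq,
    tsum_neg_one_pow_div_sq_eq_setIntegral_arctan_div, ← integral_const_mul]
  refine setIntegral_congr_fun measurableSet_Ioo fun u ⟨hu0, hu1⟩ => ?_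
  have hu2 : 0 < 1 - u ^ 2 := by nlinarith
  rw [smul_eq_mul, integral_inv_one_sub_mul_mul_one_sub_two_mul_div_one_add_sq hu0 hu1]
  field_simp
end

section
/- ∑_{n=1}^∞ (2n)! / (4ⁿ (n!)²) · 1/(2n) = log 2. -/
/-!
The numbers `C(2n,n)/4ⁿ` are the coefficients of the binomial series of `(1 - x)^(-1/2)`, so
`∑_{n ≥ 1} C(2n,n)/4ⁿ · xⁿ⁻¹ = (1/√(1-x) - 1)/x` on `(0, 1)`. All terms being nonnegative, the
series may be integrated termwise over `[0, 1]`, which gives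
`∑_{n ≥ 1} C(2n,n)/(4ⁿ n) = ∫₀¹ (1/√(1-x) - 1)/x dx = 2 log 2`,
an antiderivative being `-2 log(1 + √(1-x))`.
-/

open Finset MeasureTheory Real Set intervalIntegral
open scoped Nat Interval

lemma ascPochhammer_eval_one_half (n : ℕ) :
    (ascPochhammer ℝ n).eval (1 / 2) = n ! * (n.centralBinom / 4 ^ n) := by
  induction n with
  | zero => simp
  | succ n ih =>
    have h : ((n : ℝ) + 1) * (n + 1).centralBinom = 2 * (2 * n + 1) * n.centralBinom := by
      exact_mod_cast Nat.succ_mul_centralBinom_succ n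
    rw [ascPochhammer_succ_eval, ih, Nat.factorial_succ, Nat.cast_mul, pow_succ]
    calc (n ! : ℝ) * (n.centralBinom / 4 ^ n) * (1 / 2 + n)
        = n ! * (2 * (2 * n + 1) * n.centralBinom) / (4 ^ n * 4) := by field_simp; ring
      _ = ((n + 1 : ℕ) : ℝ) * n ! * ((n + 1).centralBinom / (4 ^ n * 4)) := by
        rw [← h]; push_cast; ring

lemma centralBinom_div_four_pow_eq_multichoose (n : ℕ) :
    (n.centralBinom : ℝ) / 4 ^ n = Ring.multichoose (1 / 2 : ℝ) n := by
  have h := Ring.factorial_nsmul_multichoose_eq_ascPochhammer (1 / 2 : ℝ) n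
  rw [nsmul_eq_mul, Polynomial.ascPochhammer_smeval_eq_eval, ascPochhammer_eval_one_half] at h
  exact (mul_left_cancel₀ (by positivity) h).symm

theorem hasSum_centralBinom_div_four_pow_mul_pow {x : ℝ} (hx : |x| < 1) :
    HasSum (fun n : ℕ => (n.centralBinom : ℝ) / 4 ^ n * x ^ n) (1 / √(1 - x)) := by
  have h := (one_div_one_sub_rpow_hasFPowerSeriesOnBall_zero (1 / 2)).hasSum
    (y := x) (by simpa [enorm_eq_nnnorm, ← NNReal.coe_lt_coe] using hx)
  simp only [FormalMultilinearSeries.ofScalars_apply_eq, zero_add, smul_eq_mul,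
    ← Ring.multichoose_eq, ← centralBinom_div_four_pow_eq_multichoose] at h
  rwa [sqrt_eq_rpow]

lemma hasSum_centralBinom_succ_div_four_pow_mul_pow {x : ℝ} (hx : |x| < 1) (hx₀ : x ≠ 0) :
    HasSum (fun n : ℕ => ((n + 1).centralBinom : ℝ) / 4 ^ (n + 1) * x ^ n)
      ((1 / √(1 - x) - 1) / x) := by
  have h := ((hasSum_nat_add_iff' 1).2 (hasSum_centralBinom_div_four_pow_mul_pow hx)).div_const x
  simp only [sum_range_one, Nat.centralBinom_zero, pow_zero, Nat.cast_one, div_one,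
    mul_one] at h
  refine h.congr_fun fun n => ?_
  field_simp
  ring

lemma one_le_one_div_sqrt_one_sub {x : ℝ} (hx₀ : 0 ≤ x) (hx₁ : x < 1) : 1 ≤ 1 / √(1 - x) := by
  rw [le_div_iff₀ (sqrt_pos.2 (by linarith)), one_mul]
  exact sqrt_le_one.2 (by linarith)

lemma continuous_neg_two_mul_log_one_add_sqrt_one_sub :
    Continuous fun y : ℝ => -2 * log (1 + √(1 - y)) :=
  continuous_const.mul <| (by fun_prop : Continuous fun y : ℝ => 1 + √(1 - y)).log
    fun y => by positivity

/-- With `s = √(1 - x)` one has `x = (1 - s)(1 + s)`, so the derivative is `1 / (s (1 + s))`. -/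
lemma hasDerivAt_neg_two_mul_log_one_add_sqrt_one_sub {x : ℝ} (hx₀ : x ≠ 0) (hx₁ : x < 1) :
    HasDerivAt (fun y => -2 * log (1 + √(1 - y))) ((1 / √(1 - x) - 1) / x) x := by
  have hpos : 0 < 1 - x := by linarith
  have hs : 0 < √(1 - x) := sqrt_pos.2 hpos
  have hsq : √(1 - x) ^ 2 = 1 - x := sq_sqrt hpos.le
  refine (((((hasDerivAt_id' x).const_sub 1).sqrt hpos.ne').const_add 1).log
    (by positivity) |>.const_mul (-2)).congr_deriv ?_
  field_simp
  linear_combination hsq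

lemma intervalIntegrable_one_div_sqrt_one_sub_sub_one_div :
    IntervalIntegrable (fun x => (1 / √(1 - x) - 1) / x) volume 0 1 := by
  refine intervalIntegrable_deriv_of_nonneg
    continuous_neg_two_mul_log_one_add_sqrt_one_sub.continuousOn (fun x hx => ?_) fun x hx => ?_
  all_goals simp only [zero_le_one, min_eq_left, max_eq_right, Set.mem_Ioo] at hx
  · exact hasDerivAt_neg_two_mul_log_one_add_sqrt_one_sub hx.1.ne' hx.2
  · exact div_nonneg (sub_nonneg.2 (one_le_one_div_sqrt_one_sub hx.1.le hx.2)) hx.1.le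

lemma integral_one_div_sqrt_one_sub_sub_one_div :
    ∫ x in (0 : ℝ)..1, (1 / √(1 - x) - 1) / x = 2 * log 2 := by
  rw [integral_eq_sub_of_hasDerivAt_of_le zero_le_one
    continuous_neg_two_mul_log_one_add_sqrt_one_sub.continuousOn
    (fun x hx => hasDerivAt_neg_two_mul_log_one_add_sqrt_one_sub hx.1.ne' hx.2)
    intervalIntegrable_one_div_sqrt_one_sub_sub_one_div]
  norm_num

theorem hasSum_centralBinom_succ_div_four_pow_div_succ :
    HasSum (fun n : ℕ => ((n + 1).centralBinom : ℝ) / 4 ^ (n + 1) / (n + 1)) (2 * log 2) := by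
  set F : ℕ → ℝ → ℝ := fun n x => (n + 1).centralBinom / 4 ^ (n + 1) * x ^ n
  have hlim : ∀ x ∈ Ioo (0 : ℝ) 1, HasSum (fun n => F n x) ((1 / √(1 - x) - 1) / x) :=
    fun x hx => hasSum_centralBinom_succ_div_four_pow_mul_pow
      (abs_lt.2 ⟨by linarith [hx.1], hx.2⟩) hx.1.ne'
  have hF_nonneg : ∀ n, ∀ x ∈ Ioo (0 : ℝ) 1, 0 ≤ F n x := fun n x hx => by
    simp only [F]; have := hx.1; positivity
  have hIoo : ∀ᵐ x, x ∈ Ι (0 : ℝ) 1 → x ∈ Ioo (0 : ℝ) 1 := by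
    filter_upwards [(countable_singleton (1 : ℝ)).ae_notMem volume] with x hx1 hx
    rw [uIoc_of_le zero_le_one] at hx
    exact ⟨hx.1, lt_of_le_of_ne hx.2 hx1⟩
  have h := hasSum_integral_of_dominated_convergence F
    (fun n => (by fun_prop : Continuous (F n)).aestronglyMeasurable)
    (fun n => hIoo.mono fun x hx hx' => (norm_of_nonneg (hF_nonneg n x (hx hx'))).le)
    (hIoo.mono fun x hx hx' => (hlim x (hx hx')).summable)
    (intervalIntegrable_one_div_sqrt_one_sub_sub_one_div.congr_ae <|
      (ae_restrict_iff' measurableSet_uIoc).2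
        (hIoo.mono fun x hx hx' => (hlim x (hx hx')).tsum_eq.symm))
    (hIoo.mono fun x hx hx' => hlim x (hx hx'))
  rw [integral_one_div_sqrt_one_sub_sub_one_div] at h
  refine h.congr_fun fun n => ?_
  simp [F, integral_pow, div_eq_mul_inv]

lemma factorial_two_mul_div_factorial_sq (m : ℕ) :
    ((2 * m)! : ℝ) / (m ! : ℝ) ^ 2 = m.centralBinom := by
  rw [Nat.centralBinom_eq_two_mul_choose, Nat.cast_choose ℝ (by omega : m ≤ 2 * m), two_mul,
    Nat.add_sub_cancel, sq]

theorem stmt8 :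
    ∑' n : ℕ, (((2 * (n + 1)).factorial : ℝ) /
        (4 ^ (n + 1) * ((n + 1).factorial : ℝ) ^ 2) * (1 / (2 * (n + 1)))) =
      Real.log 2 := by
  have hterm : ∀ n : ℕ, (((2 * (n + 1)).factorial : ℝ) /
      (4 ^ (n + 1) * ((n + 1).factorial : ℝ) ^ 2) * (1 / (2 * (n + 1)))) =
      1 / 2 * (((n + 1).centralBinom : ℝ) / 4 ^ (n + 1) / (n + 1)) := fun n => by
    rw [← factorial_two_mul_div_factorial_sq]
    field_simp
  rw [tsum_congr hterm, (hasSum_centralBinom_succ_div_four_pow_div_succ.mul_left _).tsum_eq]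
  ring
end

section
/- For every integer n ≥ 1, the sequence y_n = (2n+1)(n!)⁴ satisfies y_{n+1} = (n⁴ + (n+1)⁴ + 2(n² + (n+1)²)) y_n − n⁸ y_{n−1}. -/
theorem stmt11 (y : ℕ → ℤ) (hy : ∀ n : ℕ, y n = (2 * n + 1) * (n.factorial : ℤ) ^ 4) :
    ∀ n : ℕ, 1 ≤ n →
      y (n + 1) = ((n : ℤ) ^ 4 + ((n : ℤ) + 1) ^ 4 + 2 * ((n : ℤ) ^ 2 + ((n : ℤ) + 1) ^ 2)) * y n
        - (n : ℤ) ^ 8 * y (n - 1) := by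
  rintro n hn
  obtain ⟨m, rfl⟩ := Nat.exists_eq_add_of_le hn
  simp only [hy, Nat.add_sub_cancel_left]
  have h1 : ((1 + m + 1).factorial : ℤ) = (m + 2) * (1 + m).factorial := by
    rw [show 1 + m + 1 = (1 + m) + 1 from rfl, Nat.factorial_succ]
    push_cast; ring
  have h2 : ((1 + m).factorial : ℤ) = (m + 1) * m.factorial := by
    rw [show 1 + m = m + 1 from by omega, Nat.factorial_succ]
    push_cast; ring
  rw [h1, h2]
  push_cast
  ring
end

section
/- For every integer n ≥ 1, the sequence y_n = (3n² + 3n + 1)(n!)⁵ satisfies y_{n+1} = (n⁵ + (n+1)⁵ + 6(n³ + (n+1)³)) y_n − n¹⁰ y_{n−1}. -/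
theorem stmt12 (y : ℕ → ℤ)
    (hy : ∀ n : ℕ, y n = (3 * (n : ℤ) ^ 2 + 3 * n + 1) * (n.factorial : ℤ) ^ 5) :
    ∀ n : ℕ, 1 ≤ n →
      y (n + 1) = ((n : ℤ) ^ 5 + ((n : ℤ) + 1) ^ 5 + 6 * ((n : ℤ) ^ 3 + ((n : ℤ) + 1) ^ 3)) * y n
        - (n : ℤ) ^ 10 * y (n - 1) := by
  rintro ⟨_ | n⟩ h
  · omega
  · simp only [Nat.add_sub_cancel, hy]
    simp only [Nat.factorial_succ]
    push_cast
    ring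
end

section
/- For every integer n ≥ 1, the sequence y_n = (n² + n + 1)(n!)⁵ satisfies y_{n+1} = (n⁵ + (n+1)⁵ + 6(n³ + (n+1)³) − 4(2n+1)) y_n − n¹⁰ y_{n−1}. -/
theorem stmt13 (y : ℕ → ℤ)
    (hy : ∀ n : ℕ, y n = ((n : ℤ) ^ 2 + n + 1) * (n.factorial : ℤ) ^ 5) :
    ∀ n : ℕ, 1 ≤ n →
      y (n + 1) = ((n : ℤ) ^ 5 + ((n : ℤ) + 1) ^ 5 + 6 * ((n : ℤ) ^ 3 + ((n : ℤ) + 1) ^ 3)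
          - 4 * (2 * (n : ℤ) + 1)) * y n
        - (n : ℤ) ^ 10 * y (n - 1) := by
  rintro (_ | m) h
  · omega
  · simp only [hy, Nat.add_sub_cancel]
    have h1 : ((m + 1 + 1 : ℕ).factorial : ℤ) = (m + 2) * (m + 1) * (m.factorial : ℤ) := by
      rw [Nat.factorial_succ, Nat.factorial_succ]; push_cast; ring
    have h2 : ((m + 1 : ℕ).factorial : ℤ) = (m + 1) * (m.factorial : ℤ) := by
      rw [Nat.factorial_succ]; push_cast; ring
    rw [h1, h2]
    push_cast
    ring
end

section
/- For every integer n ≥ 1, the sequence y_n = (5n⁴ + 10n³ + 19n² + 14n + 4)(n!)⁵ satisfies y_{n+1} = (n⁵ + (n+1)⁵ + 16(n³ + (n+1)³) − 4(2n+1)) y_n − n¹⁰ y_{n−1}. -/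
theorem stmt14 (y : ℕ → ℤ)
    (hy : ∀ n : ℕ, y n = (5 * (n : ℤ) ^ 4 + 10 * (n : ℤ) ^ 3 + 19 * (n : ℤ) ^ 2 + 14 * n + 4) *
      (n.factorial : ℤ) ^ 5) :
    ∀ n : ℕ, 1 ≤ n →
      y (n + 1) = ((n : ℤ) ^ 5 + ((n : ℤ) + 1) ^ 5 + 16 * ((n : ℤ) ^ 3 + ((n : ℤ) + 1) ^ 3)
          - 4 * (2 * (n : ℤ) + 1)) * y n
        - (n : ℤ) ^ 10 * y (n - 1) := by
  rintro n hn
  obtain ⟨m, rfl⟩ := Nat.exists_eq_add_of_le' hn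
  simp only [hy, Nat.add_sub_cancel_left, Nat.factorial_succ]
  push_cast
  ring
end

section
/- For every integer n ≥ 1, the sequence y_n = (2n² + 2n + 1)(n!)⁷ satisfies y_{n+1} = (n⁷ + (n+1)⁷ + 8(n⁵ + (n+1)⁵) − 8(n³ + (n+1)³) + 4(2n+1)) y_n − n¹⁴ y_{n−1}. -/
theorem stmt15 (y : ℕ → ℤ)
    (hy : ∀ n : ℕ, y n = (2 * (n : ℤ) ^ 2 + 2 * n + 1) * (n.factorial : ℤ) ^ 7) :
    ∀ n : ℕ, 1 ≤ n →
      y (n + 1) = ((n : ℤ) ^ 7 + ((n : ℤ) + 1) ^ 7 + 8 * ((n : ℤ) ^ 5 + ((n : ℤ) + 1) ^ 5)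
          - 8 * ((n : ℤ) ^ 3 + ((n : ℤ) + 1) ^ 3) + 4 * (2 * (n : ℤ) + 1)) * y n
        - (n : ℤ) ^ 14 * y (n - 1) := by
  rintro n hn
  obtain ⟨m, rfl⟩ := Nat.exists_eq_add_of_le hn
  simp only [hy]
  have h1 : ((1 + m + 1).factorial : ℤ) = (m + 2) * (1 + m).factorial := by
    rw [show 1 + m + 1 = m + 2 by ring, Nat.factorial_succ]
    push_cast; ring
  have h2 : ((1 + m).factorial : ℤ) = (m + 1) * m.factorial := by
    rw [show 1 + m = m + 1 by ring, Nat.factorial_succ]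
    push_cast; ring
  have h3 : 1 + m - 1 = m := by omega
  rw [h3, h1, h2]
  push_cast
  ring
end

section
/- ∑_{k=1}^∞ 1/(k⁷ (2k² + 2k + 1)(2k² − 2k + 1)) = ζ(7) − 4ζ(3) + 4. -/
/-!
Since `(2x² + 2x + 1)(2x² − 2x + 1) = 4x⁴ + 1`, partial fractions give
`1 / (x⁷ (2x² + 2x + 1)(2x² − 2x + 1)) = 1/x⁷ − 4/x³ − 4/(2x² + 2x + 1) + 4/(2x² − 2x + 1)`.
At `x = k` the last two terms are `q (k − 1) − q k` for `q k = 4 / (2k² + 2k + 1)`, so they telescope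
to `q 0 = 4`, while the first two sum to `ζ(7) − 4 ζ(3)`.
-/

open Filter Topology

lemma one_div_pow_seven_mul_quadratics {K : Type*} [Field K] {x : K} (hx : x ≠ 0)
    (hp : 2 * x ^ 2 + 2 * x + 1 ≠ 0) (hm : 2 * x ^ 2 - 2 * x + 1 ≠ 0) :
    1 / (x ^ 7 * (2 * x ^ 2 + 2 * x + 1) * (2 * x ^ 2 - 2 * x + 1)) =
      1 / x ^ 7 - 4 / x ^ 3 - 4 / (2 * x ^ 2 + 2 * x + 1) + 4 / (2 * x ^ 2 - 2 * x + 1) := by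
  have h7 := pow_ne_zero 7 hx
  have h3 := pow_ne_zero 3 hx
  rw [div_sub_div _ _ h7 h3, div_sub_div _ _ (mul_ne_zero h7 h3) hp,
    div_add_div _ _ (mul_ne_zero (mul_ne_zero h7 h3) hp) hm,
    div_eq_div_iff (mul_ne_zero (mul_ne_zero h7 hp) hm)
      (mul_ne_zero (mul_ne_zero (mul_ne_zero h7 h3) hp) hm)]
  ring

lemma hasSum_sub_succ_of_antitone {f : ℕ → ℝ} {a : ℝ} (hf : Antitone f)
    (h : Tendsto f atTop (𝓝 a)) : HasSum (fun n ↦ f n - f (n + 1)) (f 0 - a) := by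
  rw [hasSum_iff_tendsto_nat_of_nonneg fun n ↦ sub_nonneg.2 (hf n.le_succ)]
  simp_rw [Finset.sum_range_sub']
  exact tendsto_const_nhds.sub h

lemma hasSum_one_div_nat_add_one_pow_riemannZeta {k : ℕ} (hk : 1 < k) :
    HasSum (fun n : ℕ ↦ 1 / ((n : ℂ) + 1) ^ k) (riemannZeta k) := by
  have hs : Summable fun n : ℕ ↦ 1 / (n : ℂ) ^ k := by
    refine Summable.of_norm ?_
    simpa using Real.summable_one_div_nat_pow.2 hk
  rw [zeta_nat_eq_tsum_of_gt_one hk]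
  simpa [zero_pow (by omega : k ≠ 0)] using (hasSum_nat_add_iff' 1).2 hs.hasSum

lemma antitone_four_div_quadratic : Antitone fun k : ℕ ↦ 4 / (2 * (k : ℝ) ^ 2 + 2 * k + 1) :=
  fun m n hmn ↦ div_le_div_of_nonneg_left (by norm_num) (by positivity) (by gcongr)

lemma tendsto_four_div_quadratic :
    Tendsto (fun k : ℕ ↦ 4 / (2 * (k : ℝ) ^ 2 + 2 * k + 1)) atTop (𝓝 0) :=
  tendsto_const_nhds.div_atTop <|
    tendsto_atTop_mono (fun k ↦ by nlinarith [sq_nonneg (k : ℝ)]) tendsto_natCast_atTop_atTop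

lemma two_mul_natCast_add_one_sq_add_ne_zero {R : Type*} [CommRing R] [CharZero R] (k : ℕ) :
    2 * ((k : R) + 1) ^ 2 + 2 * ((k : R) + 1) + 1 ≠ 0 := by
  exact_mod_cast (by positivity : 2 * (k + 1) ^ 2 + 2 * (k + 1) + 1 ≠ 0)

lemma two_mul_natCast_add_one_sq_sub_ne_zero {R : Type*} [CommRing R] [CharZero R] (k : ℕ) :
    2 * ((k : R) + 1) ^ 2 - 2 * ((k : R) + 1) + 1 ≠ 0 := by
  rw [show 2 * ((k : R) + 1) ^ 2 - 2 * ((k : R) + 1) + 1 = ((2 * k ^ 2 + 2 * k + 1 : ℕ) : R) by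
    push_cast; ring]
  exact_mod_cast (by positivity : 2 * k ^ 2 + 2 * k + 1 ≠ 0)

lemma hasSum_four_div_quadratic_sub :
    HasSum (fun k : ℕ ↦ 4 / (2 * ((k : ℂ) + 1) ^ 2 - 2 * ((k : ℂ) + 1) + 1) -
      4 / (2 * ((k : ℂ) + 1) ^ 2 + 2 * ((k : ℂ) + 1) + 1)) 4 := by
  have := Complex.hasSum_ofReal.2
    (hasSum_sub_succ_of_antitone antitone_four_div_quadratic tendsto_four_div_quadratic)
  push_cast at this
  convert this using 2 with k <;> ring

theorem stmt18 :
    ∑' k : ℕ, (1 : ℂ) / (((k : ℂ) + 1) ^ 7 * (2 * ((k : ℂ) + 1) ^ 2 + 2 * ((k : ℂ) + 1) + 1) *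
        (2 * ((k : ℂ) + 1) ^ 2 - 2 * ((k : ℂ) + 1) + 1)) =
      riemannZeta 7 - 4 * riemannZeta 3 + 4 := by
  have hsum := ((hasSum_one_div_nat_add_one_pow_riemannZeta (k := 7) (by norm_num)).sub
    ((hasSum_one_div_nat_add_one_pow_riemannZeta (k := 3) (by norm_num)).mul_left 4)).add
    hasSum_four_div_quadratic_sub
  rw [Nat.cast_ofNat, Nat.cast_ofNat] at hsum
  refine (hsum.congr_fun fun k ↦ ?_).tsum_eq
  rw [one_div_pow_seven_mul_quadratics (by exact_mod_cast k.succ_ne_zero)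
    (two_mul_natCast_add_one_sq_add_ne_zero k) (two_mul_natCast_add_one_sq_sub_ne_zero k)]
  ring
end

section
/- Let a_n, b_n be sequences of nonzero reals and let y_n be a sequence with y_n ≠ 0 for all n satisfying y_{n+1} = a_n y_n + b_n y_{n−1} for n ≥ 1. Let A_n, B_n be defined by A_0=1, A_1=a_0, B_0=0, B_1=1 and the same recurrence. Then for all n ≥ 1, A_n = y_n (1/y_0 + (a_0 y_0 − y_1) ∑_{k=0}^{n−1} (∏_{i=1}^{k}(−b_i)) / (y_k y_{k+1})) and B_n = y_0 y_n ∑_{k=0}^{n−1} (∏_{i=1}^{k}(−b_i)) / (y_k y_{k+1}). -/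
/-!
Reduction of order. For two solutions `y`, `z` of the recurrence, the Casoratian
`W k = y k * z (k + 1) - y (k + 1) * z k` satisfies `W (k + 1) = -b (k + 1) * W k`, so
`W k = (∏ i ∈ [1, k], -b i) * W 0`. Dividing by `y k * y (k + 1)` gives the increments of
`z / y`, and telescoping expresses every solution through `y`, `z 0` and `W 0`.
`A` and `B` are the solutions with `W 0 = a 0 * y 0 - y 1` and `W 0 = y 0`.
-/

open Finset

section Recurrence

variable {K : Type*} [Field K] (a b : ℕ → K)

def SolvesRecurrence (z : ℕ → K) : Prop :=
  ∀ n : ℕ, 1 ≤ n → z (n + 1) = a n * z n + b n * z (n - 1)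

variable {a b}

lemma SolvesRecurrence.succ_succ {z : ℕ → K} (hz : SolvesRecurrence a b z) (n : ℕ) :
    z (n + 2) = a (n + 1) * z (n + 1) + b (n + 1) * z n :=
  hz (n + 1) (Nat.le_add_left 1 n)

lemma casoratian_eq_prod_mul {y z : ℕ → K} (hy : SolvesRecurrence a b y)
    (hz : SolvesRecurrence a b z) (k : ℕ) :
    y k * z (k + 1) - y (k + 1) * z k =
      (∏ i ∈ Icc 1 k, -b i) * (y 0 * z 1 - y 1 * z 0) := by
  induction k with
  | zero => simp
  | succ k ih =>
    rw [prod_Icc_succ_top (Nat.le_add_left 1 k), mul_comm _ (-b (k + 1)), mul_assoc, ← ih,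
      hy.succ_succ, hz.succ_succ]
    ring

lemma SolvesRecurrence.eq_mul_sum {y z : ℕ → K} (hy : SolvesRecurrence a b y)
    (hz : SolvesRecurrence a b z) (hy_ne : ∀ n, y n ≠ 0) (n : ℕ) :
    z n = y n * (z 0 / y 0 + (y 0 * z 1 - y 1 * z 0) *
      ∑ k ∈ range n, (∏ i ∈ Icc 1 k, -b i) / (y k * y (k + 1))) := by
  have increment : ∀ k, z (k + 1) / y (k + 1) - z k / y k =
      (y 0 * z 1 - y 1 * z 0) * ((∏ i ∈ Icc 1 k, -b i) / (y k * y (k + 1))) := by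
    intro k
    rw [mul_div_assoc', mul_comm (y 0 * z 1 - y 1 * z 0), ← casoratian_eq_prod_mul hy hz k]
    field_simp [hy_ne k, hy_ne (k + 1)]
  rw [mul_sum, ← sum_congr rfl fun k _ => increment k,
    sum_range_sub (fun k => z k / y k), add_sub_cancel, mul_div_cancel₀ _ (hy_ne n)]

end Recurrence

theorem stmt19_general (a b y A B : ℕ → ℝ)
    (hy : ∀ n, y n ≠ 0)
    (hyrec : ∀ n : ℕ, 1 ≤ n → y (n + 1) = a n * y n + b n * y (n - 1))
    (hA0 : A 0 = 1) (hA1 : A 1 = a 0)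
    (hB0 : B 0 = 0) (hB1 : B 1 = 1)
    (hA : ∀ n : ℕ, 1 ≤ n → A (n + 1) = a n * A n + b n * A (n - 1))
    (hB : ∀ n : ℕ, 1 ≤ n → B (n + 1) = a n * B n + b n * B (n - 1)) :
    ∀ n : ℕ, 1 ≤ n →
      A n = y n * (1 / y 0 + (a 0 * y 0 - y 1) *
          ∑ k ∈ Finset.range n, (∏ i ∈ Finset.Icc 1 k, (-b i)) / (y k * y (k + 1))) ∧
      B n = y 0 * y n *
          ∑ k ∈ Finset.range n, (∏ i ∈ Finset.Icc 1 k, (-b i)) / (y k * y (k + 1)) := by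
  intro n _
  constructor
  · rw [SolvesRecurrence.eq_mul_sum hyrec hA hy n, hA0, hA1]
    ring
  · rw [SolvesRecurrence.eq_mul_sum hyrec hB hy n, hB0, hB1]
    ring

theorem stmt19 (a b y A B : ℕ → ℝ)
    (ha : ∀ n, a n ≠ 0) (hb : ∀ n, b n ≠ 0) (hy : ∀ n, y n ≠ 0)
    (hyrec : ∀ n : ℕ, 1 ≤ n → y (n + 1) = a n * y n + b n * y (n - 1))
    (hA0 : A 0 = 1) (hA1 : A 1 = a 0)
    (hB0 : B 0 = 0) (hB1 : B 1 = 1)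
    (hA : ∀ n : ℕ, 1 ≤ n → A (n + 1) = a n * A n + b n * A (n - 1))
    (hB : ∀ n : ℕ, 1 ≤ n → B (n + 1) = a n * B n + b n * B (n - 1)) :
    ∀ n : ℕ, 1 ≤ n →
      A n = y n * (1 / y 0 + (a 0 * y 0 - y 1) *
          ∑ k ∈ Finset.range n, (∏ i ∈ Finset.Icc 1 k, (-b i)) / (y k * y (k + 1))) ∧
      B n = y 0 * y n *
          ∑ k ∈ Finset.range n, (∏ i ∈ Finset.Icc 1 k, (-b i)) / (y k * y (k + 1)) :=
  stmt19_general a b y A B hy hyrec hA0 hA1 hB0 hB1 hA hB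
end
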